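/- arXiv:2509.26209 — 2 statements merged into one kernel-verified Lean document; each statement's English description precedes it below -/
import Mathlib

section
/- Let S and A be finite nonempty types, T : S → A → S → ℝ a transition kernel (T s a s' ≥ 0 and ∑_{s'} T s a s' = 1 for all s, a), R : S → A → S → ℝ a reward function, γ ∈ ℝ a discount factor, d : S → ℝ a potential function, and λ ∈ ℝ. If Q' : S → A → ℝ satisfies the Bellman optimality equation for the shaped reward R'(s,a,s') = R(s,a,s') + λ·(γ·d(s') − d(s)), then the function defined by (s,a) ↦ Q' s a + λ · d s satisfies the Bellman optimality equation for the original reward R. -/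
/-! Potential shaping adds `λ (γ d s' - d s)` to every reward; the `γ λ d s'` part is absorbed by
the maximum over next actions, since `fmax` commutes with adding a constant, and the `-λ d s`
part is a constant averaged against the row `T s a`, which sums to 1, so it moves to the
left-hand side as `+ λ d s`. -/

/-- Maximum of a real-valued function over a finite nonempty type,
taken as `Finset.max'` over `Finset.univ`. -/
noncomputable def fmax {A : Type*} [Fintype A] [Nonempty A] (f : A → ℝ) : ℝ :=
  (Finset.univ.image f).max' (Finset.univ_nonempty.image f)

section fmax

variable {A : Type*} [Fintype A] [Nonempty A]

theorem fmax_eq_sup' (f : A → ℝ) : fmax f = Finset.univ.sup' Finset.univ_nonempty f := by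
  rw [fmax, Finset.max'_eq_sup', Finset.sup'_image]
  rfl

theorem fmax_add_const (f : A → ℝ) (c : ℝ) : fmax (fun a => f a + c) = fmax f + c := by
  rw [fmax_eq_sup', fmax_eq_sup', Finset.sup'_add]

end fmax

theorem Finset.sum_mul_add_const_of_sum_eq_one {ι : Type*} (s : Finset ι) {w : ι → ℝ}
    (hw : ∑ i ∈ s, w i = 1) (f : ι → ℝ) (c : ℝ) :
    ∑ i ∈ s, w i * (f i + c) = ∑ i ∈ s, w i * f i + c := by
  simp only [mul_add, Finset.sum_add_distrib, ← Finset.sum_mul, hw, one_mul]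

theorem unshifted_Q_satisfies_original_bellman_general
    {S A : Type*} [Fintype S] [Nonempty S] [Fintype A] [Nonempty A]
    (T : S → A → S → ℝ)
    (hT1 : ∀ s a, ∑ s', T s a s' = 1)
    (R : S → A → S → ℝ) (γ : ℝ) (d : S → ℝ) (lam : ℝ)
    (Q' : S → A → ℝ)
    (hQ' : ∀ s a, Q' s a =
      ∑ s', T s a s' * ((R s a s' + lam * (γ * d s' - d s)) +
        γ * fmax (fun a' => Q' s' a'))) :
    ∀ s a, Q' s a + lam * d s =
      ∑ s', T s a s' * (R s a s' +
        γ * fmax (fun a' => Q' s' a' + lam * d s')) := by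
  intro s a
  calc Q' s a + lam * d s
      = ∑ s', T s a s' * ((R s a s' + lam * (γ * d s' - d s)) +
          γ * fmax (fun a' => Q' s' a')) + lam * d s := by rw [← hQ']
    _ = ∑ s', T s a s' * ((R s a s' + lam * (γ * d s' - d s)) +
          γ * fmax (fun a' => Q' s' a') + lam * d s) :=
        (Finset.univ.sum_mul_add_const_of_sum_eq_one (hT1 s a) _ _).symm
    _ = ∑ s', T s a s' * (R s a s' + γ * fmax (fun a' => Q' s' a' + lam * d s')) :=
        Finset.sum_congr rfl fun s' _ => by rw [fmax_add_const]; ring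

/-- If `Q'` satisfies the Bellman optimality equation for the potential-based
shaped reward `R' s a s' = R s a s' + lam * (γ * d s' - d s)`, then
`(s, a) ↦ Q' s a + lam * d s` satisfies the Bellman optimality equation for
the original reward `R`. -/
theorem unshifted_Q_satisfies_original_bellman
    {S A : Type*} [Fintype S] [Nonempty S] [Fintype A] [Nonempty A]
    (T : S → A → S → ℝ) (hT0 : ∀ s a s', 0 ≤ T s a s')
    (hT1 : ∀ s a, ∑ s', T s a s' = 1)
    (R : S → A → S → ℝ) (γ : ℝ) (d : S → ℝ) (lam : ℝ)
    (Q' : S → A → ℝ)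
    (hQ' : ∀ s a, Q' s a =
      ∑ s', T s a s' * ((R s a s' + lam * (γ * d s' - d s)) +
        γ * fmax (fun a' => Q' s' a'))) :
    ∀ s a, Q' s a + lam * d s =
      ∑ s', T s a s' * (R s a s' +
        γ * fmax (fun a' => Q' s' a' + lam * d s')) :=
  unshifted_Q_satisfies_original_bellman_general T hT1 R γ d lam Q' hQ'
end

section
/- Let S and A be finite nonempty types, T : S → A → S → ℝ a transition kernel (T s a s' ≥ 0 and ∑_{s'} T s a s' = 1 for all s, a), R : S → A → S → ℝ a reward function, and γ ≥ 0. Define the Bellman optimality operator B by (B Q) s a = ∑_{s'} T s a s' · (R s a s' + γ · max_{a'} Q s' a'). Then B is a γ-contraction in the supremum norm: for all Q₁, Q₂ : S → A → ℝ, max_{s,a} |(B Q₁) s a − (B Q₂) s a| ≤ γ · max_{s,a} |Q₁ s a − Q₂ s a|. -/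
lemma le_fmax {A : Type*} [Fintype A] [Nonempty A] (f : A → ℝ) (a : A) :
    f a ≤ fmax f :=
  Finset.le_max' _ _ (Finset.mem_image_of_mem f (Finset.mem_univ a))

lemma fmax_le {A : Type*} [Fintype A] [Nonempty A] {f : A → ℝ} {c : ℝ}
    (h : ∀ a, f a ≤ c) : fmax f ≤ c := by
  apply Finset.max'_le
  intro y hy
  obtain ⟨a, -, rfl⟩ := Finset.mem_image.mp hy
  exact h a

lemma abs_fmax_sub_fmax {A : Type*} [Fintype A] [Nonempty A] (f g : A → ℝ) :
    |fmax f - fmax g| ≤ fmax (fun a => |f a - g a|) := by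
  rw [abs_sub_le_iff]
  constructor
  · rw [sub_le_iff_le_add]
    apply fmax_le
    intro a
    have h1 : f a - g a ≤ fmax (fun a => |f a - g a|) :=
      (le_abs_self _).trans (le_fmax (fun a => |f a - g a|) a)
    have h2 : g a ≤ fmax g := le_fmax g a
    linarith
  · rw [sub_le_iff_le_add]
    apply fmax_le
    intro a
    have h1 : g a - f a ≤ fmax (fun a => |f a - g a|) := by
      have h1 := le_fmax (fun a => |f a - g a|) a
      have h2 : -(f a - g a) ≤ |f a - g a| := neg_le_abs _
      linarith
    have h2 : f a ≤ fmax f := le_fmax f a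
    linarith

/-- The Bellman optimality operator
`(B Q) s a = ∑ s', T s a s' * (R s a s' + γ * max_{a'} Q s' a')`
is a `γ`-contraction in the supremum norm. -/
theorem bellman_operator_contraction
    {S A : Type*} [Fintype S] [Nonempty S] [Fintype A] [Nonempty A]
    (T : S → A → S → ℝ) (hT0 : ∀ s a s', 0 ≤ T s a s')
    (hT1 : ∀ s a, ∑ s', T s a s' = 1)
    (R : S → A → S → ℝ) (γ : ℝ) (hγ0 : 0 ≤ γ)
    (B : (S → A → ℝ) → (S → A → ℝ))
    (hB : ∀ Q s a, B Q s a =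
      ∑ s', T s a s' * (R s a s' + γ * fmax (fun a' => Q s' a')))
    (Q₁ Q₂ : S → A → ℝ) :
    fmax (fun p : S × A => |B Q₁ p.1 p.2 - B Q₂ p.1 p.2|) ≤
      γ * fmax (fun p : S × A => |Q₁ p.1 p.2 - Q₂ p.1 p.2|) := by
  set M := fmax (fun p : S × A => |Q₁ p.1 p.2 - Q₂ p.1 p.2|) with hM
  apply fmax_le
  rintro ⟨s, a⟩
  simp only [hB]
  rw [← Finset.sum_sub_distrib]
  calc |∑ s', (T s a s' * (R s a s' + γ * fmax (fun a' => Q₁ s' a')) -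
        T s a s' * (R s a s' + γ * fmax (fun a' => Q₂ s' a')))|
      ≤ ∑ s', |T s a s' * (R s a s' + γ * fmax (fun a' => Q₁ s' a')) -
        T s a s' * (R s a s' + γ * fmax (fun a' => Q₂ s' a'))| :=
        Finset.abs_sum_le_sum_abs _ _
    _ ≤ ∑ s', T s a s' * (γ * M) := by
        apply Finset.sum_le_sum
        intro s' _
        have : T s a s' * (R s a s' + γ * fmax (fun a' => Q₁ s' a')) -
            T s a s' * (R s a s' + γ * fmax (fun a' => Q₂ s' a')) =
            T s a s' * (γ * (fmax (fun a' => Q₁ s' a') - fmax (fun a' => Q₂ s' a'))) := by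
          ring
        rw [this, abs_mul, abs_mul, abs_of_nonneg (hT0 s a s'), abs_of_nonneg hγ0]
        apply mul_le_mul_of_nonneg_left _ (hT0 s a s')
        apply mul_le_mul_of_nonneg_left _ hγ0
        calc |fmax (fun a' => Q₁ s' a') - fmax (fun a' => Q₂ s' a')|
            ≤ fmax (fun a' => |Q₁ s' a' - Q₂ s' a'|) := abs_fmax_sub_fmax _ _
          _ ≤ M := by
              apply fmax_le
              intro a'
              exact le_fmax (fun p : S × A => |Q₁ p.1 p.2 - Q₂ p.1 p.2|) (s', a')
    _ = γ * M := by rw [← Finset.sum_mul, hT1, one_mul]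
end
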